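/- Fix N > 0 and a real m with 0 < m < N. For (μ1, μ0) ∈ (0,1)², let τ := μ1 − μ0, v := μ1(1−μ1) + μ0(1−μ0), t := √m·|τ|/√(2v), and define the Bernoulli normal-approximation marginal ratio η^NA(m, μ1, μ0) := 2Φ(−t) + ((N − m)/m)·t·φ(t). Then sup_{(μ1, μ0) ∈ (0,1)²} η^NA(m, μ1, μ0) ≤ 1 if and only if m ≥ N/3. -/

import Mathlib

/-- The standard normal density `φ`. -/
noncomputable def stdGaussPDF (x : ℝ) : ℝ :=
  (Real.sqrt (2 * Real.pi))⁻¹ * Real.exp (-x ^ 2 / 2)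

/-- The standard normal distribution function `Φ`. -/
noncomputable def stdGaussCDF (t : ℝ) : ℝ :=
  ∫ x in Set.Iic t, stdGaussPDF x

/-- The Gaussian limit function `f_k(t) = 2Φ(−t) + k t φ(t)`. -/
noncomputable def fG (k t : ℝ) : ℝ :=
  2 * stdGaussCDF (-t) + k * t * stdGaussPDF t

/-- The Bernoulli normal-approximation marginal ratio
`η^NA(m, μ1, μ0) = 2Φ(−t) + ((N − m)/m) t φ(t)` with
`t = √m |μ1 − μ0| / √(2(μ1(1−μ1) + μ0(1−μ0)))`. -/
noncomputable def etaNA (N m μ1 μ0 : ℝ) : ℝ :=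
  fG ((N - m) / m)
    (Real.sqrt m * |μ1 - μ0| / Real.sqrt (2 * (μ1 * (1 - μ1) + μ0 * (1 - μ0))))

/-!
Write `f_k(t) = 2Φ(−t) + k t φ(t) = 1 − 2∫₀ᵗ φ + k t φ(t)`, with `k = (N − m)/m`.
Since `φ` decreases on `[0, ∞)`, `t φ(t) ≤ ∫₀ᵗ φ ≤ t φ(0)`. The left bound gives `f_k(t) ≤ 1` for
all `t ≥ 0` once `k ≤ 2`, i.e. `m ≥ N/3`. The right bound gives `f_k(t) > 1` as soon as
`k e^{−t²/2} > 2`, which holds for all small `t > 0` when `k > 2`; and `t` takes arbitrarily small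
positive values, e.g. at `μ0 = 1/2` and `μ1 ↓ 1/2`.
-/

open MeasureTheory Set Real Filter Topology

lemma stdGaussPDF_eq_gaussianPDFReal : stdGaussPDF = ProbabilityTheory.gaussianPDFReal 0 1 := by
  ext x
  simp [stdGaussPDF, ProbabilityTheory.gaussianPDFReal]

lemma stdGaussPDF_pos (x : ℝ) : 0 < stdGaussPDF x := by
  unfold stdGaussPDF
  positivity

lemma continuous_stdGaussPDF : Continuous stdGaussPDF := by
  unfold stdGaussPDF
  fun_prop

lemma integrable_stdGaussPDF : Integrable stdGaussPDF := by
  rw [stdGaussPDF_eq_gaussianPDFReal]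
  exact ProbabilityTheory.integrable_gaussianPDFReal 0 1

lemma integral_stdGaussPDF : ∫ x, stdGaussPDF x = 1 := by
  rw [stdGaussPDF_eq_gaussianPDFReal]
  exact ProbabilityTheory.integral_gaussianPDFReal_eq_one 0 one_ne_zero

lemma stdGaussPDF_neg (x : ℝ) : stdGaussPDF (-x) = stdGaussPDF x := by
  simp [stdGaussPDF]

lemma stdGaussPDF_eq_mul_exp (x : ℝ) : stdGaussPDF x = stdGaussPDF 0 * exp (-x ^ 2 / 2) := by
  simp [stdGaussPDF]

lemma stdGaussPDF_le_of_le {x y : ℝ} (hx : 0 ≤ x) (hxy : x ≤ y) : stdGaussPDF y ≤ stdGaussPDF x := by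
  rw [stdGaussPDF_eq_mul_exp y, stdGaussPDF_eq_mul_exp x]
  have := (stdGaussPDF_pos 0).le
  gcongr

lemma stdGaussCDF_zero : stdGaussCDF 0 = 1 / 2 := by
  have hsplit : stdGaussCDF 0 + ∫ x in Ioi 0, stdGaussPDF x = 1 := by
    rw [← integral_stdGaussPDF]
    exact intervalIntegral.integral_Iic_add_Ioi integrable_stdGaussPDF.integrableOn
      integrable_stdGaussPDF.integrableOn
  have hsymm : ∫ x in Ioi 0, stdGaussPDF x = stdGaussCDF 0 := by
    simpa [stdGaussPDF_neg, stdGaussCDF] using (integral_comp_neg_Iic 0 stdGaussPDF).symm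
  linarith

lemma stdGaussCDF_neg (t : ℝ) : stdGaussCDF (-t) = 1 / 2 - ∫ x in 0..t, stdGaussPDF x := by
  have hdiff := intervalIntegral.integral_Iic_sub_Iic (a := -t) (b := 0) (μ := volume)
    integrable_stdGaussPDF.integrableOn integrable_stdGaussPDF.integrableOn
  have hsymm : ∫ x in -t..0, stdGaussPDF x = ∫ x in 0..t, stdGaussPDF x := by
    simpa [stdGaussPDF_neg] using (intervalIntegral.integral_comp_neg (a := 0) (b := t) stdGaussPDF).symm
  rw [← stdGaussCDF_zero, stdGaussCDF, stdGaussCDF, ← hsymm, ← hdiff]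
  ring

lemma mul_stdGaussPDF_le_integral {t : ℝ} (ht : 0 ≤ t) :
    t * stdGaussPDF t ≤ ∫ x in 0..t, stdGaussPDF x := by
  calc t * stdGaussPDF t = ∫ _ in 0..t, stdGaussPDF t := by simp
    _ ≤ ∫ x in 0..t, stdGaussPDF x :=
      intervalIntegral.integral_mono_on ht intervalIntegrable_const
        (continuous_stdGaussPDF.intervalIntegrable 0 t) fun _ hx => stdGaussPDF_le_of_le hx.1 hx.2

lemma integral_stdGaussPDF_le_mul {t : ℝ} (ht : 0 ≤ t) :
    ∫ x in 0..t, stdGaussPDF x ≤ t * stdGaussPDF 0 := by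
  calc ∫ x in 0..t, stdGaussPDF x ≤ ∫ _ in 0..t, stdGaussPDF 0 :=
      intervalIntegral.integral_mono_on ht (continuous_stdGaussPDF.intervalIntegrable 0 t)
        intervalIntegrable_const fun _ hx => stdGaussPDF_le_of_le le_rfl hx.1
    _ = t * stdGaussPDF 0 := by simp

lemma fG_eq (k t : ℝ) : fG k t = 1 - 2 * (∫ x in 0..t, stdGaussPDF x) + k * t * stdGaussPDF t := by
  rw [fG, stdGaussCDF_neg]
  ring

lemma fG_le_one {k t : ℝ} (hk : k ≤ 2) (ht : 0 ≤ t) : fG k t ≤ 1 := by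
  have hint := mul_stdGaussPDF_le_integral ht
  have hk' : k * (t * stdGaussPDF t) ≤ 2 * (t * stdGaussPDF t) :=
    mul_le_mul_of_nonneg_right hk (mul_nonneg ht (stdGaussPDF_pos t).le)
  rw [fG_eq]
  linarith

lemma one_lt_fG {k t : ℝ} (ht : 0 < t) (hk : 2 < k * exp (-t ^ 2 / 2)) : 1 < fG k t := by
  have hint := integral_stdGaussPDF_le_mul ht.le
  have hlt : 2 * (t * stdGaussPDF 0) < k * t * stdGaussPDF t := by
    rw [stdGaussPDF_eq_mul_exp t]
    have := mul_lt_mul_of_pos_right hk (mul_pos ht (stdGaussPDF_pos 0))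
    linarith
  rw [fG_eq]
  linarith

lemma eventually_one_lt_fG {k : ℝ} (hk : 2 < k) : ∀ᶠ t in 𝓝[>] 0, 1 < fG k t := by
  have hnear : ∀ᶠ t in 𝓝 (0 : ℝ), 2 < k * exp (-t ^ 2 / 2) := by
    have hcont : Continuous fun t : ℝ => k * exp (-t ^ 2 / 2) := by fun_prop
    exact hcont.tendsto 0 |>.eventually (lt_mem_nhds (by simpa using hk))
  filter_upwards [self_mem_nhdsWithin, nhdsWithin_le_nhds hnear] with t ht hkt
  exact one_lt_fG ht hkt

/-- The statistic `t` in `etaNA`. -/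
noncomputable def standardizedEffect (m μ1 μ0 : ℝ) : ℝ :=
  √m * |μ1 - μ0| / √(2 * (μ1 * (1 - μ1) + μ0 * (1 - μ0)))

lemma standardizedEffect_nonneg (m μ1 μ0 : ℝ) : 0 ≤ standardizedEffect m μ1 μ0 := by
  unfold standardizedEffect
  positivity

lemma tendsto_standardizedEffect_nhdsGT {m μ0 : ℝ} (hm : 0 < m) (hμ0 : μ0 ∈ Ioo 0 1) :
    Tendsto (fun μ1 => standardizedEffect m μ1 μ0) (𝓝[>] μ0) (𝓝[>] 0) := by
  obtain ⟨hμ0_pos, hμ0_lt⟩ := hμ0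
  have hcont : ContinuousAt (fun μ1 => standardizedEffect m μ1 μ0) μ0 := by
    refine ContinuousAt.div (by fun_prop) (by fun_prop) ?_
    exact (sqrt_pos.2 (by nlinarith)).ne'
  have hzero : standardizedEffect m μ0 μ0 = 0 := by simp [standardizedEffect]
  refine tendsto_nhdsWithin_iff.2 ⟨?_, ?_⟩
  · simpa [hzero] using hcont.tendsto.mono_left nhdsWithin_le_nhds
  · filter_upwards [Ioo_mem_nhdsGT hμ0_lt] with μ1 ⟨hμ01, hμ1⟩
    exact div_pos (mul_pos (sqrt_pos.2 hm) (abs_pos.2 (sub_ne_zero.2 hμ01.ne')))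
      (sqrt_pos.2 (by nlinarith))

theorem rule_of_thirds_normal_approx_general (N m : ℝ) (hm : 0 < m) :
    (∀ μ1 ∈ Set.Ioo (0 : ℝ) 1, ∀ μ0 ∈ Set.Ioo (0 : ℝ) 1, etaNA N m μ1 μ0 ≤ 1)
      ↔ N / 3 ≤ m := by
  constructor
  · intro hbound
    by_contra! hlt
    have hk : 2 < (N - m) / m := by
      rw [lt_div_iff₀ hm]
      linarith
    have hhalf : (1 / 2 : ℝ) ∈ Ioo 0 1 := by norm_num
    obtain ⟨μ1, hgt, hμ1⟩ := ((tendsto_standardizedEffect_nhdsGT hm hhalf).eventually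
      (eventually_one_lt_fG hk) |>.and (Ioo_mem_nhdsGT hhalf.2)).exists
    exact (hbound μ1 ⟨by linarith [hμ1.1], hμ1.2⟩ _ hhalf).not_gt hgt
  · intro hNm μ1 _ μ0 _
    exact fG_le_one (by rw [div_le_iff₀ hm]; linarith) (standardizedEffect_nonneg m μ1 μ0)

/-- Rule of thirds under the Bernoulli normal approximation:
`sup_{(μ1,μ0) ∈ (0,1)²} η^NA(m, μ1, μ0) ≤ 1` if and only if `m ≥ N/3`. -/
theorem rule_of_thirds_normal_approx (N m : ℝ) (hN : 0 < N) (hm : 0 < m)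
    (hmN : m < N) :
    (∀ μ1 ∈ Set.Ioo (0 : ℝ) 1, ∀ μ0 ∈ Set.Ioo (0 : ℝ) 1, etaNA N m μ1 μ0 ≤ 1)
      ↔ N / 3 ≤ m :=
  rule_of_thirds_normal_approx_general N m hm
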